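/- arXiv:2103.04410 — 3 statements merged into one kernel-verified Lean document; each statement's English description precedes it below -/
import Mathlib

section
/- Theorem 1, case σ = 0 (weak solution exists): Suppose Assumptions 1, 2 and 3 hold, and run the OptDE algorithm with σ = 0 for K ≥ 1 iterations. Then the returned best iterate w̃_K satisfies, for every D > 0, sup{ ⟨F(w̃_K), w̃_K − w⟩ : w ∈ 𝒲, ‖w̃_K − w‖ ≤ D } ≤ C_0 D ‖w_0 − w*‖ √(L / (A_{K−1} + a_1)), where C_0 = (1 + δ/(αγ)) √(8α/γ), a_1 = αγ/L, A_{K−1} = αγ(K−1)/L, and w* is the weak solution from Assumption 3. -/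
open scoped RealInnerProductSpace
open Finset MeasureTheory

abbrev Vec (d : ℕ) := EuclideanSpace ℝ (Fin d)

/-- The dual norm `‖y‖_* = sup_{nrm x ≤ 1} ⟪x, y⟫` of a (general) norm `nrm` on `ℝ^d`. -/
noncomputable def dualNorm {d : ℕ} (nrm : Vec d → ℝ) (y : Vec d) : ℝ :=
  sSup ((fun x => (⟪x, y⟫ : ℝ)) '' {x | nrm x ≤ 1})

/-- The Bregman divergence `V_v(w) = ½‖w‖² − ½‖v‖² − ⟪∇½‖v‖², w − v⟫` of `½ nrm²`,
where `g` is the gradient map of `½ nrm²`. -/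
noncomputable def breg {d : ℕ} (nrm : Vec d → ℝ) (g : Vec d → Vec d) (v w : Vec d) : ℝ :=
  nrm w ^ 2 / 2 - nrm v ^ 2 / 2 - ⟪g v, w - v⟫

/-!
Both OptDE steps minimize `⟪c, x⟫ + ‖x - center‖² / (2γ)` over `W`, and first-order optimality
together with the `γ`-strong convexity of `½‖·‖²` gives a three-point inequality for each of
them. Summed over the dual-averaging steps these telescope; adding the extrapolation steps, the
Lipschitz bound and the weak-solution inequality at `w*` bounds the sum over `k ≤ K` of the squared
residuals `r_k = ‖w_k - z_{k-1}‖ + ‖w_{k-1} - z_{k-1}‖` by `8‖w₀ - w*‖² / γ²`, so the best iterate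
has `r_{k̃}² ≤ 8‖w₀ - w*‖² / (γ² K)`. Finally, optimality of the extrapolation step producing
`w̃_K`, tested against `v`, bounds `⟪F w̃_K, w̃_K - v⟫` by `L (1 + δ/(αγ)) r_{k̃} ‖w̃_K - v‖`.
-/

namespace Seminorm

variable {E : Type*} [NormedAddCommGroup E] [NormedSpace ℝ E] [FiniteDimensional ℝ E]

theorem continuous_of_finiteDimensional (p : Seminorm ℝ E) : Continuous p :=
  continuousOn_univ.1 (p.convexOn.continuousOn isOpen_univ)

theorem exists_pos_mul_norm_le (p : Seminorm ℝ E) (hp : ∀ x, x ≠ 0 → 0 < p x) :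
    ∃ m > 0, ∀ x, m * ‖x‖ ≤ p x := by
  cases subsingleton_or_nontrivial E
  · exact ⟨1, one_pos, fun x => by simp [Subsingleton.elim x 0]⟩
  obtain ⟨x₀, hx₀, hmin⟩ := (isCompact_sphere (0 : E) 1).exists_isMinOn
    (NormedSpace.sphere_nonempty.2 zero_le_one) p.continuous_of_finiteDimensional.continuousOn
  refine ⟨p x₀, hp x₀ (ne_zero_of_mem_unit_sphere ⟨x₀, hx₀⟩), fun x => ?_⟩
  rcases eq_or_ne x 0 with rfl | hx
  · simp
  have hnx : 0 < ‖x‖ := norm_pos_iff.2 hx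
  have hmem : ‖x‖⁻¹ • x ∈ Metric.sphere (0 : E) 1 := by simp [norm_smul, hnx.ne']
  have : p x₀ ≤ ‖x‖⁻¹ * p x := by simpa [map_smul_eq_mul] using hmin hmem
  rwa [inv_mul_eq_div, le_div_iff₀ hnx] at this

theorem map_sub_le_map_sub_add_map_sub {𝕜 F : Type*} [SeminormedRing 𝕜] [AddGroup F]
    [SMul 𝕜 F] (p : Seminorm 𝕜 F) (x y z : F) : p (x - z) ≤ p (x - y) + p (y - z) := by
  simpa using map_add_le_add p (x - y) (y - z)

end Seminorm

section DualNorm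

variable {d : ℕ} (p : Seminorm ℝ (Vec d))

theorem bddAbove_inner_image_unitBall (hp : ∀ x, x ≠ 0 → 0 < p x) (y : Vec d) :
    BddAbove ((fun x => (⟪x, y⟫ : ℝ)) '' {x | p x ≤ 1}) := by
  obtain ⟨m, hm, hmp⟩ := p.exists_pos_mul_norm_le hp
  refine ⟨m⁻¹ * ‖y‖, ?_⟩
  rintro _ ⟨x, hx, rfl⟩
  have hxm : ‖x‖ ≤ m⁻¹ := by
    rw [← mul_le_mul_iff_right₀ hm, mul_inv_cancel₀ hm.ne']
    exact (hmp x).trans hx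
  exact (real_inner_le_norm x y).trans (mul_le_mul_of_nonneg_right hxm (norm_nonneg y))

theorem inner_le_mul_dualNorm (hp : ∀ x, x ≠ 0 → 0 < p x) (x y : Vec d) :
    ⟪y, x⟫ ≤ p x * dualNorm p y := by
  rcases eq_or_ne x 0 with rfl | hx
  · simp
  have hpx := hp x hx
  have hmem : (p x)⁻¹ • x ∈ {x | p x ≤ 1} := by
    simp [map_smul_eq_mul, abs_of_pos hpx, inv_mul_cancel₀ hpx.ne']
  have : (p x)⁻¹ * ⟪x, y⟫ ≤ dualNorm p y := by
    rw [← real_inner_smul_left]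
    exact le_csSup (bddAbove_inner_image_unitBall p hp y) ⟨_, hmem, rfl⟩
  rwa [real_inner_comm, inv_mul_le_iff₀ hpx] at this

theorem inner_le_of_dualNorm_le (hp : ∀ x, x ≠ 0 → 0 < p x) {y : Vec d} {c : ℝ}
    (h : dualNorm p y ≤ c) (x : Vec d) : ⟪y, x⟫ ≤ c * p x :=
  (inner_le_mul_dualNorm p hp x y).trans <| by
    rw [mul_comm c]
    exact mul_le_mul_of_nonneg_left h (apply_nonneg p x)

end DualNorm

section Prox

variable {E : Type*} [NormedAddCommGroup E] [InnerProductSpace ℝ E]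
  (p : Seminorm ℝ E) (γ : ℝ)

noncomputable def proxObjective (c center x : E) : ℝ :=
  ⟪c, x⟫ + 1 / (2 * γ) * p (x - center) ^ 2

theorem proxObjective_add (c c' center x : E) :
    proxObjective p γ (c + c') center x = proxObjective p γ c center x + ⟪c', x⟫ := by
  simp only [proxObjective, inner_add_left]
  ring

variable [CompleteSpace E] {p γ} {g : E → E} {W : Set E}

open InnerProductSpace in
theorem IsMinOn.proxObjective_optimality
    (hgrad : ∀ x, HasGradientAt (fun v => p v ^ 2 / 2) (g x) x) (hW : Convex ℝ W)
    {c center xs : E} (hxs : xs ∈ W) (hmin : IsMinOn (proxObjective p γ c center) W xs)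
    {u : E} (hu : u ∈ W) :
    0 ≤ ⟪c, u - xs⟫ + 1 / γ * ⟪g (xs - center), u - xs⟫ := by
  have hshift : HasFDerivAt (fun x : E => x - center) (ContinuousLinearMap.id ℝ E) xs :=
    (hasFDerivAt_id xs).sub_const center
  have hψ : HasFDerivAt (fun x => p (x - center) ^ 2 / 2)
      ((toDual ℝ E (g (xs - center))).comp (ContinuousLinearMap.id ℝ E)) xs :=
    (hgrad (xs - center)).hasFDerivAt.comp (g := fun v => p v ^ 2 / 2) xs hshift
  have hderiv : HasFDerivAt (proxObjective p γ c center)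
      (innerSL ℝ c + (1 / γ) • (toDual ℝ E (g (xs - center))).comp (ContinuousLinearMap.id ℝ E))
      xs := by
    refine ((innerSL ℝ c).hasFDerivAt.add (hψ.const_mul (1 / γ))).congr_of_eventuallyEq
      (Filter.Eventually.of_forall fun x => ?_)
    simp only [proxObjective, Pi.add_apply, innerSL_apply_apply]
    ring
  have hcone : u - xs ∈ posTangentConeAt W xs :=
    sub_mem_posTangentConeAt_of_segment_subset (hW.segment_subset hxs hu)
  simpa [real_inner_smul_left, toDual_apply_apply] using
    hmin.localize.hasFDerivWithinAt_nonneg hderiv.hasFDerivWithinAt hcone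

theorem IsMinOn.proxObjective_add_le (hγ : 0 < γ)
    (hgrad : ∀ x, HasGradientAt (fun v => p v ^ 2 / 2) (g x) x)
    (hstrong : ∀ v x, p v ^ 2 / 2 + ⟪g v, x - v⟫ + γ / 2 * p (x - v) ^ 2 ≤ p x ^ 2 / 2)
    (hW : Convex ℝ W) {c center xs : E} (hxs : xs ∈ W)
    (hmin : IsMinOn (proxObjective p γ c center) W xs) {u : E} (hu : u ∈ W) :
    proxObjective p γ c center xs + 1 / 2 * p (u - xs) ^ 2 ≤ proxObjective p γ c center u := by
  have hopt := hmin.proxObjective_optimality hgrad hW hxs hu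
  have hconv := hstrong (xs - center) (u - center)
  rw [sub_sub_sub_cancel_right] at hconv
  rw [inner_sub_right] at hopt
  have hconv' := mul_le_mul_of_nonneg_left hconv (one_div_nonneg.2 hγ.le)
  have hγγ : 1 / γ * (γ / 2 * p (u - xs) ^ 2) = 1 / 2 * p (u - xs) ^ 2 := by field_simp
  simp only [proxObjective]
  linear_combination hopt + hconv' - hγγ

theorem sum_inner_sub_add_le_of_isMinOn_proxObjective (hγ : 0 < γ)
    (hgrad : ∀ x, HasGradientAt (fun v => p v ^ 2 / 2) (g x) x)
    (hstrong : ∀ v x, p v ^ 2 / 2 + ⟪g v, x - v⟫ + γ / 2 * p (x - v) ^ 2 ≤ p x ^ 2 / 2)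
    (hW : Convex ℝ W) {G z : ℕ → E} {x₀ : E} (hx₀ : x₀ ∈ W) (hz₀ : z 0 = x₀)
    (hz : ∀ k, 1 ≤ k → z k ∈ W ∧ IsMinOn (proxObjective p γ (∑ i ∈ Icc 1 k, G i) x₀) W (z k))
    (K : ℕ) {u : E} (hu : u ∈ W) :
    ∑ i ∈ Icc 1 K, (⟪G i, z i - u⟫ + 1 / 2 * p (z i - z (i - 1)) ^ 2) ≤
      1 / (2 * γ) * p (u - x₀) ^ 2 := by
  have hz' : ∀ k, z k ∈ W ∧ IsMinOn (proxObjective p γ (∑ i ∈ Icc 1 k, G i) x₀) W (z k) := by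
    rintro (_ | k)
    · refine ⟨hz₀ ▸ hx₀, isMinOn_iff.2 fun x _ => ?_⟩
      simp only [proxObjective, hz₀, Icc_eq_empty_of_lt zero_lt_one, sum_empty, inner_zero_left,
        sub_self, map_zero, zero_add, ne_eq, OfNat.ofNat_ne_zero, not_false_eq_true, zero_pow,
        mul_zero]
      positivity
    · exact hz _ (by omega)
  have hvalue : ∀ k, ∑ i ∈ Icc 1 k, (⟪G i, z i⟫ + 1 / 2 * p (z i - z (i - 1)) ^ 2) ≤
      proxObjective p γ (∑ i ∈ Icc 1 k, G i) x₀ (z k) := by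
    intro k
    induction k with
    | zero => simp [proxObjective, hz₀]
    | succ k ih =>
      have hstep := (hz' k).2.proxObjective_add_le hγ hgrad hstrong hW (hz' k).1 (hz' (k + 1)).1
      rw [sum_Icc_succ_top (by omega), sum_Icc_succ_top (by omega), proxObjective_add,
        Nat.add_sub_cancel]
      linarith
  have hbound := (hvalue K).trans ((hz' K).2 hu)
  have hdist : 0 ≤ 1 / (2 * γ) * p (z K - x₀) ^ 2 := by positivity
  have hsplit : ∑ i ∈ Icc 1 K, (⟪G i, z i - u⟫ + 1 / 2 * p (z i - z (i - 1)) ^ 2) =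
      ∑ i ∈ Icc 1 K, (⟪G i, z i⟫ + 1 / 2 * p (z i - z (i - 1)) ^ 2) - ⟪∑ i ∈ Icc 1 K, G i, u⟫ := by
    simp only [inner_sub_right, sum_inner, ← sum_sub_distrib]
    exact sum_congr rfl fun i _ => by ring
  rw [hsplit]
  unfold proxObjective at hbound
  linarith

theorem IsMinOn.extrapolation_step_le (hγ : 0 < γ)
    (hgrad : ∀ x, HasGradientAt (fun v => p v ^ 2 / 2) (g x) x)
    (hstrong : ∀ v x, p v ^ 2 / 2 + ⟪g v, x - v⟫ + γ / 2 * p (x - v) ^ 2 ≤ p x ^ 2 / 2)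
    (hW : Convex ℝ W) {F : E → E} {L α : ℝ} (hL : 0 < L) (hα : 0 ≤ α) {w w' z' u : E}
    (hw : w ∈ W) (hmin : IsMinOn (proxObjective p γ ((α / L) • F w') z') W w) (hu : u ∈ W)
    (hlip : ⟪F w - F w', w - u⟫ ≤ L * p (w - w') * p (w - u)) :
    1 / 2 * p (w - z') ^ 2 + γ / 2 * p (w - u) ^ 2 - α * γ * p (w - w') * p (w - u) ≤
      1 / 2 * p (u - z') ^ 2 - α * γ / L * ⟪F w, w - u⟫ := by
  have hscale : ∀ x, γ * proxObjective p γ ((α / L) • F w') z' x =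
      α * γ / L * ⟪F w', x⟫ + 1 / 2 * p (x - z') ^ 2 := fun x => by
    rw [proxObjective, real_inner_smul_left]
    field_simp
  have hprox := mul_le_mul_of_nonneg_left
    (hmin.proxObjective_add_le hγ hgrad hstrong hW hw hu) hγ.le
  have hlip' := mul_le_mul_of_nonneg_left hlip (by positivity : 0 ≤ α * γ / L)
  have hL' : α * γ / L * (L * p (w - w') * p (w - u)) = α * γ * p (w - w') * p (w - u) := by
    field_simp
  rw [map_sub_rev p u w] at hprox
  simp only [inner_sub_left, inner_sub_right] at hlip' ⊢
  linarith [hscale w, hscale u]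

theorem IsMinOn.inner_le_of_extrapolation_step
    (hgrad : ∀ x, HasGradientAt (fun v => p v ^ 2 / 2) (g x) x)
    (hW : Convex ℝ W) {F : E → E} {L α δ : ℝ} (hL : 0 < L) (hα : 0 < α) (hγ : 0 < γ)
    {w w' z' v : E} (hw : w ∈ W) (hmin : IsMinOn (proxObjective p γ ((α / L) • F w') z') W w)
    (hv : v ∈ W) (hlip : ⟪F w - F w', w - v⟫ ≤ L * p (w - w') * p (w - v))
    (hg : ⟪g (w - z'), v - w⟫ ≤ δ * p (w - z') * p (w - v)) :
    ⟪F w, w - v⟫ ≤ L * (p (w - w') + δ / (α * γ) * p (w - z')) * p (w - v) := by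
  have hopt := hmin.proxObjective_optimality hgrad hW hw hv
  have hflip : ⟪F w', v - w⟫ = -⟪F w', w - v⟫ := by rw [← inner_neg_right, neg_sub]
  rw [real_inner_smul_left, hflip] at hopt
  have hg' := mul_le_mul_of_nonneg_left hg (one_div_nonneg.2 hγ.le)
  have hFw' : α / L * ⟪F w', w - v⟫ ≤ 1 / γ * (δ * p (w - z') * p (w - v)) := by linarith
  calc ⟪F w, w - v⟫ = ⟪F w - F w', w - v⟫ + L / α * (α / L * ⟪F w', w - v⟫) := by
        rw [inner_sub_left]; field_simp; ring
    _ ≤ L * p (w - w') * p (w - v) + L / α * (1 / γ * (δ * p (w - z') * p (w - v))) := by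
        gcongr
    _ = L * (p (w - w') + δ / (α * γ) * p (w - z')) * p (w - v) := by field_simp

end Prox

/-- Young's inequality on `αγ b c ≤ αγ (p + c') c` with `αγ ≤ γ/4`; the last term telescopes
when summed. -/
theorem mul_sq_add_le_of_le_add {γ α p b c c' : ℝ} (hγ0 : 0 < γ) (hγ1 : γ ≤ 1) (hα0 : 0 ≤ α)
    (hα : α ≤ 1 / 4) (hc : 0 ≤ c) (hb : b ≤ p + c') :
    γ / 16 * (p + c') ^ 2 ≤
      1 / 2 * p ^ 2 + γ / 2 * c ^ 2 - α * γ * b * c + γ / 4 * (c' ^ 2 - c ^ 2) := by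
  have hαγ0 : 0 ≤ α * γ := by positivity
  have hbc := mul_le_mul_of_nonneg_left hb (mul_nonneg hαγ0 hc)
  have hamgm : (p + c') * c ≤ (p ^ 2 + 2 * c ^ 2 + c' ^ 2) / 2 := by
    nlinarith [sq_nonneg (p - c), sq_nonneg (c' - c)]
  have hαγ : 0 ≤ (γ / 4 - α * γ) * (p ^ 2 + 2 * c ^ 2 + c' ^ 2) :=
    mul_nonneg (by nlinarith) (by positivity)
  have hsq : γ / 16 * (p + c') ^ 2 ≤ γ / 8 * (p ^ 2 + c' ^ 2) := by
    nlinarith [mul_nonneg hγ0.le (sq_nonneg (p - c'))]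
  have hp : 0 ≤ (1 / 2 - γ / 4) * p ^ 2 := mul_nonneg (by linarith) (sq_nonneg p)
  nlinarith [mul_le_mul_of_nonneg_left hamgm hαγ0]

theorem sum_Icc_sub_prev_sq (f : ℕ → ℝ) (n : ℕ) :
    ∑ i ∈ Icc 1 n, (f (i - 1) ^ 2 - f i ^ 2) = f 0 ^ 2 - f n ^ 2 := by
  induction n with
  | zero => simp
  | succ n ih => rw [sum_Icc_succ_top (by omega), ih, Nat.add_sub_cancel]; ring

theorem mul_sum_sq_add_prev_le_sum {γ α : ℝ} (hγ0 : 0 < γ) (hγ1 : γ ≤ 1) (hα0 : 0 ≤ α)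
    (hα : α ≤ 1 / 4) {p c b : ℕ → ℝ} (hc : ∀ i, 0 ≤ c i) (hc0 : c 0 = 0)
    (hb : ∀ i, 1 ≤ i → b i ≤ p i + c (i - 1)) (K : ℕ) :
    γ / 16 * ∑ i ∈ Icc 1 K, (p i + c (i - 1)) ^ 2 ≤
      ∑ i ∈ Icc 1 K, (1 / 2 * p i ^ 2 + γ / 2 * c i ^ 2 - α * γ * b i * c i) :=
  calc γ / 16 * ∑ i ∈ Icc 1 K, (p i + c (i - 1)) ^ 2
      ≤ ∑ i ∈ Icc 1 K, (1 / 2 * p i ^ 2 + γ / 2 * c i ^ 2 - α * γ * b i * c i +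
        γ / 4 * (c (i - 1) ^ 2 - c i ^ 2)) := by
        rw [mul_sum]
        exact sum_le_sum fun i hi =>
          mul_sq_add_le_of_le_add hγ0 hγ1 hα0 hα (hc i) (hb i (mem_Icc.1 hi).1)
    _ = ∑ i ∈ Icc 1 K, (1 / 2 * p i ^ 2 + γ / 2 * c i ^ 2 - α * γ * b i * c i) -
        γ / 4 * c K ^ 2 := by rw [sum_add_distrib, ← mul_sum, sum_Icc_sub_prev_sq, hc0]; ring
    _ ≤ _ := sub_le_self _ (by positivity)

section OptDE

variable {E : Type*} [NormedAddCommGroup E] [InnerProductSpace ℝ E]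
  {p : Seminorm ℝ E} {γ : ℝ} {g : E → E} {W : Set E}

noncomputable def optdeResidual (p : Seminorm ℝ E) (w z : ℕ → E) (k : ℕ) : ℝ :=
  p (w k - z (k - 1)) + p (w (k - 1) - z (k - 1))

theorem optdeResidual_nonneg (w z : ℕ → E) (k : ℕ) : 0 ≤ optdeResidual p w z k :=
  add_nonneg (apply_nonneg p _) (apply_nonneg p _)

theorem map_sub_le_optdeResidual (w z : ℕ → E) (k : ℕ) :
    p (w k - w (k - 1)) ≤ optdeResidual p w z k := by
  simpa [optdeResidual, map_sub_rev p (z (k - 1))] using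
    p.map_sub_le_map_sub_add_map_sub (w k) (z (k - 1)) (w (k - 1))

variable [CompleteSpace E]

theorem optde_sum_residual_sq_le (hγ0 : 0 < γ) (hγ1 : γ ≤ 1)
    (hgrad : ∀ x, HasGradientAt (fun v => p v ^ 2 / 2) (g x) x)
    (hstrong : ∀ v x, p v ^ 2 / 2 + ⟪g v, x - v⟫ + γ / 2 * p (x - v) ^ 2 ≤ p x ^ 2 / 2)
    (hW : Convex ℝ W) {F : E → E} {L α : ℝ} (hL : 0 < L) (hα0 : 0 < α) (hα : α ≤ 1 / 4)
    (hlip : ∀ x ∈ W, ∀ y ∈ W, ∀ u, ⟪F x - F y, u⟫ ≤ L * p (x - y) * p u)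
    {wstar : E} (hwstar : wstar ∈ W) (hweak : ∀ v ∈ W, 0 ≤ ⟪F v, v - wstar⟫)
    {a : ℕ → ℝ} (ha : ∀ k, 1 ≤ k → a k = α * γ / L) {w z : ℕ → E} (hwW : ∀ k, w k ∈ W)
    (hz₀ : z 0 = w 0)
    (hw : ∀ k, 1 ≤ k →
      IsMinOn (proxObjective p γ ((α / L) • F (w (k - 1))) (z (k - 1))) W (w k))
    (hz : ∀ k, 1 ≤ k → z k ∈ W ∧
      IsMinOn (proxObjective p γ (∑ i ∈ Icc 1 k, a i • F (w i)) (w 0)) W (z k))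
    (K : ℕ) :
    ∑ k ∈ Icc 1 K, optdeResidual p w z k ^ 2 ≤ 8 / γ ^ 2 * p (w 0 - wstar) ^ 2 := by
  have hstep : ∀ i ∈ Icc 1 K,
      1 / 2 * p (w i - z (i - 1)) ^ 2 + γ / 2 * p (w i - z i) ^ 2 -
          α * γ * p (w i - w (i - 1)) * p (w i - z i) ≤
        ⟪a i • F (w i), z i - wstar⟫ + 1 / 2 * p (z i - z (i - 1)) ^ 2 := by
    intro i hi
    have hi1 := (mem_Icc.1 hi).1
    have hext := (hw i hi1).extrapolation_step_le hγ0 hgrad hstrong hW hL hα0.le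
      (hwW i) (hz i hi1).1 (hlip _ (hwW i) _ (hwW (i - 1)) _)
    have hsplit : ⟪a i • F (w i), z i - wstar⟫ =
        α * γ / L * ⟪F (w i), w i - wstar⟫ - α * γ / L * ⟪F (w i), w i - z i⟫ := by
      rw [ha i hi1, real_inner_smul_left, ← mul_sub, ← inner_sub_right, sub_sub_sub_cancel_left]
    have hweak' := mul_nonneg (by positivity : 0 ≤ α * γ / L) (hweak _ (hwW i))
    linarith
  have hsum := mul_sum_sq_add_prev_le_sum hγ0 hγ1 hα0.le hα (fun i => apply_nonneg p (w i - z i))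
    (by simp [hz₀]) (fun i _ => map_sub_le_optdeResidual w z i) K
  have hda := sum_inner_sub_add_le_of_isMinOn_proxObjective hγ0 hgrad hstrong hW (hwW 0) hz₀ hz K
    hwstar
  have hchain : γ / 16 * ∑ k ∈ Icc 1 K, optdeResidual p w z k ^ 2 ≤
      1 / (2 * γ) * p (w 0 - wstar) ^ 2 := by
    rw [map_sub_rev p (w 0) wstar]
    exact hsum.trans ((sum_le_sum hstep).trans hda)
  calc ∑ k ∈ Icc 1 K, optdeResidual p w z k ^ 2
      = 16 / γ * (γ / 16 * ∑ k ∈ Icc 1 K, optdeResidual p w z k ^ 2) := by field_simp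
    _ ≤ 16 / γ * (1 / (2 * γ) * p (w 0 - wstar) ^ 2) := by gcongr
    _ = 8 / γ ^ 2 * p (w 0 - wstar) ^ 2 := by field_simp; ring

theorem inner_le_mul_optdeResidual
    (hgrad : ∀ x, HasGradientAt (fun v => p v ^ 2 / 2) (g x) x)
    (hW : Convex ℝ W) {F : E → E} {L α δ : ℝ} (hL : 0 < L) (hα : 0 < α) (hγ : 0 < γ)
    (hδ : 0 ≤ δ) (hlip : ∀ x ∈ W, ∀ y ∈ W, ∀ u, ⟪F x - F y, u⟫ ≤ L * p (x - y) * p u)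
    (hgb : ∀ x u, ⟪g x, u⟫ ≤ δ * p x * p u) {w z : ℕ → E} {k : ℕ} (hwk : w k ∈ W)
    (hwk' : w (k - 1) ∈ W)
    (hmin : IsMinOn (proxObjective p γ ((α / L) • F (w (k - 1))) (z (k - 1))) W (w k))
    {v : E} (hv : v ∈ W) {D : ℝ} (hvD : p (w k - v) ≤ D) :
    ⟪F (w k), w k - v⟫ ≤ (1 + δ / (α * γ)) * D * (L * optdeResidual p w z k) := by
  have h := hmin.inner_le_of_extrapolation_step hgrad hW hL hα hγ hwk hv
    (hlip _ hwk _ hwk' _) (by simpa [map_sub_rev p v] using hgb (w k - z (k - 1)) (v - w k))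
  have hww := map_sub_le_optdeResidual (p := p) w z k
  have hwz : p (w k - z (k - 1)) ≤ optdeResidual p w z k :=
    le_add_of_nonneg_right (apply_nonneg p _)
  have hr := optdeResidual_nonneg (p := p) w z k
  calc ⟪F (w k), w k - v⟫ ≤ L * (p (w k - w (k - 1)) + δ / (α * γ) * p (w k - z (k - 1))) *
        p (w k - v) := h
    _ ≤ L * (optdeResidual p w z k + δ / (α * γ) * optdeResidual p w z k) * D := by
        gcongr
    _ = _ := by ring

end OptDE

theorem eq_natCast_mul_of_sub_one {A : ℕ → ℝ} {c : ℝ} (h₀ : A 0 = 0)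
    (h : ∀ k, 1 ≤ k → A k = A (k - 1) + c) (k : ℕ) : A k = k * c := by
  induction k with
  | zero => simp [h₀]
  | succ k ih => rw [h (k + 1) (by omega), Nat.add_sub_cancel, ih]; push_cast; ring

theorem mul_le_mul_sqrt_mul_sqrt_of_mul_sq_le {K r R L α γ : ℝ} (hK : 0 < K) (hL : 0 < L)
    (hα : 0 < α) (hγ : 0 < γ) (hr : 0 ≤ r) (hR : 0 ≤ R) (h : K * r ^ 2 ≤ 8 / γ ^ 2 * R ^ 2) :
    L * r ≤ R * √(8 * α / γ) * √(L / (K * (α * γ / L))) := by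
  have hrate : 8 * α / γ * (L / (K * (α * γ / L))) = 8 / γ ^ 2 * L ^ 2 / K := by
    field_simp
  rw [mul_assoc, ← Real.sqrt_mul (by positivity), hrate, ← Real.sqrt_sq hR, ← Real.sqrt_mul
    (sq_nonneg R), Real.le_sqrt (by positivity) (by positivity), mul_pow, ← mul_div_assoc,
    le_div_iff₀ hK]
  nlinarith [mul_le_mul_of_nonneg_left h (sq_nonneg L)]

theorem optde_sigma_zero_merit_bound_general
    {d : ℕ} (W : Set (Vec d)) (hWcv : Convex ℝ W)
    (F : Vec d → Vec d) (nrm : Vec d → ℝ) (g : Vec d → Vec d)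
    (L γ δ α : ℝ)
    -- `nrm` is a norm on ℝ^d
    (hnrm_pos : ∀ x : Vec d, x ≠ 0 → 0 < nrm x)
    (hnrm_add : ∀ x y : Vec d, nrm (x + y) ≤ nrm x + nrm y)
    (hnrm_smul : ∀ (c : ℝ) (x : Vec d), nrm (c • x) = |c| * nrm x)
    (hL : 0 < L) (hγ0 : 0 < γ) (hγ1 : γ ≤ 1) (hδ : 0 < δ)
    -- Assumption 1: F is L-Lipschitz from `nrm` to the dual norm
    (hLip : ∀ v ∈ W, ∀ u ∈ W, dualNorm nrm (F v - F u) ≤ L * nrm (v - u))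
    -- Assumption 2: ½ nrm² is differentiable with gradient g, γ-strongly convex,
    -- and its gradient is bounded in dual norm by δ‖·‖
    (hgrad : ∀ x : Vec d, HasGradientAt (fun v : Vec d => nrm v ^ 2 / 2) (g x) x)
    (hstrong : ∀ v x : Vec d,
      nrm v ^ 2 / 2 + ⟪g v, x - v⟫ + γ / 2 * nrm (x - v) ^ 2 ≤ nrm x ^ 2 / 2)
    (hgbound : ∀ x : Vec d, dualNorm nrm (g x) ≤ δ * nrm x)
    -- Assumption 3: existence of a weak solution w*
    (wstar : Vec d) (hwsW : wstar ∈ W)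
    (hweak : ∀ v ∈ W, 0 ≤ (⟪F v, v - wstar⟫ : ℝ))
    -- OptDE algorithm with σ = 0
    (hα0 : 0 < α)
    (hαle : α ≤ min (1 / (4 * Real.sqrt 2)) (Real.sqrt 3 / (4 * Real.sqrt γ)))
    (a A : ℕ → ℝ) (hA0 : A 0 = 0)
    (ha : ∀ k, 1 ≤ k → a k = α * γ / L)
    (hArec : ∀ k, 1 ≤ k → A k = A (k - 1) + a k)
    (w z : ℕ → Vec d) (hw0W : w 0 ∈ W) (hz0 : z 0 = w 0)
    -- extrapolation step: w_k = P_{z_{k−1}}((α/L) F(w_{k−1}))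
    (hwk : ∀ k, 1 ≤ k → w k ∈ W ∧
      IsMinOn (fun x => (⟪(α / L) • F (w (k - 1)), x⟫ : ℝ) +
        1 / (2 * γ) * nrm (x - z (k - 1)) ^ 2) W (w k))
    -- dual averaging step (σ = 0)
    (hzk : ∀ k, 1 ≤ k → z k ∈ W ∧
      IsMinOn (fun x => (⟪∑ i ∈ Finset.Icc 1 k, a i • F (w i), x⟫ : ℝ) +
        1 / (2 * γ) * nrm (x - w 0) ^ 2) W (z k))
    (K : ℕ) (hK : 1 ≤ K)
    -- the returned best iterate w̃_K = w kt
    (kt : ℕ) (hktmem : kt ∈ Finset.Icc 1 K)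
    (hbest : ∀ k ∈ Finset.Icc 1 K,
      nrm (w kt - z (kt - 1)) + nrm (w (kt - 1) - z (kt - 1)) ≤
        nrm (w k - z (k - 1)) + nrm (w (k - 1) - z (k - 1)))
    (D : ℝ) (hD : 0 < D) :
    ∀ v ∈ W, nrm (w kt - v) ≤ D →
      (⟪F (w kt), w kt - v⟫ : ℝ) ≤
        ((1 + δ / (α * γ)) * Real.sqrt (8 * α / γ)) * D * nrm (w 0 - wstar) *
          Real.sqrt (L / (A (K - 1) + a 1)) := by
  intro v hv hvD
  let p : Seminorm ℝ (Vec d) := .of nrm hnrm_add fun c x => by rw [hnrm_smul, Real.norm_eq_abs]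
  have hlip : ∀ x ∈ W, ∀ y ∈ W, ∀ u, ⟪F x - F y, u⟫ ≤ L * p (x - y) * p u :=
    fun x hx y hy => inner_le_of_dualNorm_le p hnrm_pos (hLip x hx y hy)
  have hgb : ∀ x u, ⟪g x, u⟫ ≤ δ * p x * p u :=
    fun x => inner_le_of_dualNorm_le p hnrm_pos (hgbound x)
  have hα : α ≤ 1 / 4 := hαle.trans <| (min_le_left _ _).trans <| one_div_le_one_div_of_le
    four_pos (le_mul_of_one_le_right four_pos.le (Real.one_le_sqrt.2 one_le_two))
  have hwW : ∀ k, w k ∈ W := by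
    rintro (_ | k)
    exacts [hw0W, (hwk _ (by omega)).1]
  have hsum := optde_sum_residual_sq_le (p := p) hγ0 hγ1 hgrad hstrong hWcv hL hα0 hα hlip hwsW
    hweak ha hwW hz0 (fun k hk => (hwk k hk).2) hzk K
  have hbest' :
      (K : ℝ) * optdeResidual p w z kt ^ 2 ≤ ∑ k ∈ Icc 1 K, optdeResidual p w z k ^ 2 := by
    simpa using card_nsmul_le_sum (Icc 1 K) _ _ fun k hk =>
      pow_le_pow_left₀ (optdeResidual_nonneg w z kt) (hbest k hk) 2
  have hmerit := inner_le_mul_optdeResidual (p := p) hgrad hWcv hL hα0 hγ0 hδ.le hlip hgb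
    (hwW kt) (hwW (kt - 1)) (hwk kt (mem_Icc.1 hktmem).1).2 hv hvD
  have hAK : A (K - 1) + a 1 = K * (α * γ / L) := by
    rw [eq_natCast_mul_of_sub_one hA0 (fun k hk => (ha k hk) ▸ hArec k hk), ha 1 le_rfl,
      Nat.cast_sub hK]
    ring
  have hrate := mul_le_mul_sqrt_mul_sqrt_of_mul_sq_le (by exact_mod_cast hK) hL hα0 hγ0
    (optdeResidual_nonneg w z kt) (apply_nonneg p _) (hbest'.trans hsum)
  calc ⟪F (w kt), w kt - v⟫ ≤ (1 + δ / (α * γ)) * D * (L * optdeResidual p w z kt) := hmerit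
    _ ≤ (1 + δ / (α * γ)) * D * (nrm (w 0 - wstar) * √(8 * α / γ) * √(L / (K * (α * γ / L)))) :=
        mul_le_mul_of_nonneg_left hrate (by positivity)
    _ = _ := by rw [hAK]; ring

/-- **Theorem 1, case σ = 0 (a weak solution exists).**
Under the Lipschitz assumption (Assumption 1), the norm assumption (Assumption 2) and
the existence of a weak solution (Assumption 3), the best iterate `w kt` returned by
the OptDE algorithm run with `σ = 0` for `K ≥ 1` iterations satisfies the restricted
strong merit-function bound
`sup{⟪F(w̃_K), w̃_K − v⟫ : v ∈ W, ‖w̃_K − v‖ ≤ D} ≤ C₀ D ‖w₀ − w*‖ √(L / (A_{K−1} + a₁))`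
with `C₀ = (1 + δ/(αγ)) √(8α/γ)`. -/
theorem optde_sigma_zero_merit_bound
    {d : ℕ} (W : Set (Vec d)) (hWne : W.Nonempty) (hWcl : IsClosed W) (hWcv : Convex ℝ W)
    (F : Vec d → Vec d) (nrm : Vec d → ℝ) (g : Vec d → Vec d)
    (L γ δ α : ℝ)
    -- `nrm` is a norm on ℝ^d
    (hnrm_pos : ∀ x : Vec d, x ≠ 0 → 0 < nrm x)
    (hnrm_add : ∀ x y : Vec d, nrm (x + y) ≤ nrm x + nrm y)
    (hnrm_smul : ∀ (c : ℝ) (x : Vec d), nrm (c • x) = |c| * nrm x)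
    (hL : 0 < L) (hγ0 : 0 < γ) (hγ1 : γ ≤ 1) (hδ : 0 < δ)
    -- Assumption 1: F is L-Lipschitz from `nrm` to the dual norm
    (hLip : ∀ v ∈ W, ∀ u ∈ W, dualNorm nrm (F v - F u) ≤ L * nrm (v - u))
    -- Assumption 2: ½ nrm² is differentiable with gradient g, γ-strongly convex,
    -- and its gradient is bounded in dual norm by δ‖·‖
    (hgrad : ∀ x : Vec d, HasGradientAt (fun v : Vec d => nrm v ^ 2 / 2) (g x) x)
    (hstrong : ∀ v x : Vec d,
      nrm v ^ 2 / 2 + ⟪g v, x - v⟫ + γ / 2 * nrm (x - v) ^ 2 ≤ nrm x ^ 2 / 2)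
    (hgbound : ∀ x : Vec d, dualNorm nrm (g x) ≤ δ * nrm x)
    -- Assumption 3: existence of a weak solution w*
    (wstar : Vec d) (hwsW : wstar ∈ W)
    (hweak : ∀ v ∈ W, 0 ≤ (⟪F v, v - wstar⟫ : ℝ))
    -- OptDE algorithm with σ = 0
    (hα0 : 0 < α)
    (hαle : α ≤ min (1 / (4 * Real.sqrt 2)) (Real.sqrt 3 / (4 * Real.sqrt γ)))
    (a A : ℕ → ℝ) (hA0 : A 0 = 0)
    (ha : ∀ k, 1 ≤ k → a k = α * γ / L)
    (hArec : ∀ k, 1 ≤ k → A k = A (k - 1) + a k)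
    (w z : ℕ → Vec d) (hw0W : w 0 ∈ W) (hz0 : z 0 = w 0)
    -- extrapolation step: w_k = P_{z_{k−1}}((α/L) F(w_{k−1}))
    (hwk : ∀ k, 1 ≤ k → w k ∈ W ∧
      IsMinOn (fun x => (⟪(α / L) • F (w (k - 1)), x⟫ : ℝ) +
        1 / (2 * γ) * nrm (x - z (k - 1)) ^ 2) W (w k))
    -- dual averaging step (σ = 0)
    (hzk : ∀ k, 1 ≤ k → z k ∈ W ∧
      IsMinOn (fun x => (⟪∑ i ∈ Finset.Icc 1 k, a i • F (w i), x⟫ : ℝ) +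
        1 / (2 * γ) * nrm (x - w 0) ^ 2) W (z k))
    (K : ℕ) (hK : 1 ≤ K)
    -- the returned best iterate w̃_K = w kt
    (kt : ℕ) (hktmem : kt ∈ Finset.Icc 1 K)
    (hbest : ∀ k ∈ Finset.Icc 1 K,
      nrm (w kt - z (kt - 1)) + nrm (w (kt - 1) - z (kt - 1)) ≤
        nrm (w k - z (k - 1)) + nrm (w (k - 1) - z (k - 1)))
    (D : ℝ) (hD : 0 < D) :
    ∀ v ∈ W, nrm (w kt - v) ≤ D →
      (⟪F (w kt), w kt - v⟫ : ℝ) ≤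
        ((1 + δ / (α * γ)) * Real.sqrt (8 * α / γ)) * D * nrm (w 0 - wstar) *
          Real.sqrt (L / (A (K - 1) + a 1)) :=
  optde_sigma_zero_merit_bound_general W hWcv F nrm g L γ δ α hnrm_pos hnrm_add hnrm_smul hL hγ0 hγ1
    hδ hLip hgrad hstrong hgbound wstar hwsW hweak hα0 hαle a A hA0 ha hArec w z hw0W hz0 hwk hzk K
    hK kt hktmem hbest D hD
end

section
/- Lemma (estimation-sequence inequality for OptDE): Suppose Assumptions 1 and 2 hold and run the OptDE algorithm (with parameter σ ≥ 0). For each k ∈ [K] define E_{1k} := a_k ( ⟨F(w_k) + (L/(αγ)) ∇_{w_k} ½‖w_k − z_{k−1}‖², w_k − z_k⟩ − (L/(αγ)) ( ½‖w_k − z_{k−1}‖² + (γ/2)‖w_k − z_k‖² ) ). Then for every u ∈ 𝒲, Σ_{k=1}^{K} a_k ( ⟨F(w_k), w_k − u⟩ − (σ/γ) V_{w_k − w_0}(u − w_0) ) ≤ Σ_{k=1}^{K} E_{1k} + (1/(2γ))‖u − w_0‖². -/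
open scoped RealInnerProductSpace
open Finset MeasureTheory

lemma combined_aux {d : ℕ} (nrm : Vec d → ℝ) (g : Vec d → Vec d) (γ : ℝ)
    (hnrm_smul : ∀ (c : ℝ) (x : Vec d), nrm (c • x) = |c| * nrm x)
    (hstrong : ∀ v x : Vec d,
      nrm v ^ 2 / 2 + ⟪g v, x - v⟫ + γ / 2 * nrm (x - v) ^ 2 ≤ nrm x ^ 2 / 2)
    (v x : Vec d) (t : ℝ) (ht0 : 0 ≤ t) (ht1 : t ≤ 1) :
    nrm (v + t • (x - v)) ^ 2 / 2 ≤
      (1 - t) * (nrm v ^ 2 / 2) + t * (nrm x ^ 2 / 2)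
        - γ / 2 * t * (1 - t) * nrm (x - v) ^ 2 := by
  have h1 := hstrong (v + t • (x - v)) v
  have h2 := hstrong (v + t • (x - v)) x
  rw [show v - (v + t • (x - v)) = (-t) • (x - v) by module, hnrm_smul, abs_neg,
    abs_of_nonneg ht0, real_inner_smul_right] at h1
  rw [show x - (v + t • (x - v)) = (1 - t) • (x - v) by module, hnrm_smul,
    abs_of_nonneg (by linarith), real_inner_smul_right] at h2
  nlinarith [mul_le_mul_of_nonneg_left h1 (by linarith : (0:ℝ) ≤ 1 - t),
             mul_le_mul_of_nonneg_left h2 ht0]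

lemma strong_min_aux {d : ℕ} (W : Set (Vec d)) (hWcv : Convex ℝ W)
    (nrm : Vec d → ℝ) (g : Vec d → Vec d) (γ : ℝ)
    (hnrm_smul : ∀ (c : ℝ) (x : Vec d), nrm (c • x) = |c| * nrm x)
    (hstrong : ∀ v x : Vec d,
      nrm v ^ 2 / 2 + ⟪g v, x - v⟫ + γ / 2 * nrm (x - v) ^ 2 ≤ nrm x ^ 2 / 2)
    (S w0 : Vec d) (c : ℝ) (hc : 0 ≤ c) (z : Vec d) (hzW : z ∈ W)
    (hmin : IsMinOn (fun x => (⟪S, x⟫ : ℝ) + c * nrm (x - w0) ^ 2) W z)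
    (x : Vec d) (hxW : x ∈ W) :
    (⟪S, z⟫ : ℝ) + c * nrm (z - w0) ^ 2 + (c * γ) * nrm (x - z) ^ 2 ≤
      ⟪S, x⟫ + c * nrm (x - w0) ^ 2 := by
  have keyt : ∀ t : ℝ, 0 < t → t ≤ 1 →
      c * γ * (1 - t) * nrm (x - z) ^ 2 ≤
        (⟪S, x⟫ + c * nrm (x - w0) ^ 2) - (⟪S, z⟫ + c * nrm (z - w0) ^ 2) := by
    intro t ht0 ht1
    have hmem : z + t • (x - z) ∈ W := by
      have := hWcv hzW hxW (by linarith : (0:ℝ) ≤ 1 - t) ht0.le (by ring)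
      rwa [show (1 - t) • z + t • x = z + t • (x - z) by module] at this
    have h := isMinOn_iff.mp hmin _ hmem
    have hcomb := combined_aux nrm g γ hnrm_smul hstrong (z - w0) (x - w0) t ht0.le ht1
    rw [show x - w0 - (z - w0) = x - z by module] at hcomb
    rw [show z - w0 + t • (x - z) = z + t • (x - z) - w0 by module] at hcomb
    have hs := mul_le_mul_of_nonneg_left hcomb (by linarith : (0:ℝ) ≤ 2 * c)
    simp only [inner_add_right, real_inner_smul_right, inner_sub_right] at h
    have hmul : t * (c * γ * (1 - t) * nrm (x - z) ^ 2) ≤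
        t * ((⟪S, x⟫ + c * nrm (x - w0) ^ 2) - (⟪S, z⟫ + c * nrm (z - w0) ^ 2)) := by
      nlinarith [h, hs]
    exact le_of_mul_le_mul_left hmul ht0
  have hD := keyt 1 one_pos le_rfl
  rcases le_or_gt (c * γ * nrm (x - z) ^ 2) 0 with hQ | hQ
  · linarith
  · have hfinal : c * γ * nrm (x - z) ^ 2 ≤
        (⟪S, x⟫ + c * nrm (x - w0) ^ 2) - (⟪S, z⟫ + c * nrm (z - w0) ^ 2) := by
      apply le_of_forall_pos_le_add
      intro ε hε
      have ht0 : 0 < min 1 (ε / (c * γ * nrm (x - z) ^ 2)) := lt_min one_pos (div_pos hε hQ)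
      have hk := keyt _ ht0 (min_le_left _ _)
      have hle : min 1 (ε / (c * γ * nrm (x - z) ^ 2)) * (c * γ * nrm (x - z) ^ 2) ≤ ε := by
        have h1 := min_le_right 1 (ε / (c * γ * nrm (x - z) ^ 2))
        have h2 := mul_le_mul_of_nonneg_right h1 hQ.le
        rwa [div_mul_cancel₀ _ hQ.ne'] at h2
      nlinarith [hk, hle]
    linarith

set_option maxHeartbeats 2000000 in
/-- **Lemma (estimation-sequence inequality for OptDE).**
Under Assumptions 1 and 2, running OptDE with parameter `σ ≥ 0`, for every `u ∈ W`,
`Σ_{k=1}^K a_k (⟪F(w_k), w_k − u⟫ − (σ/γ) V_{w_k − w₀}(u − w₀))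
  ≤ Σ_{k=1}^K E_{1k} + (1/(2γ))‖u − w₀‖²`,
where `E_{1k} = a_k (⟪F(w_k) + (L/(αγ)) ∇½‖w_k − z_{k−1}‖², w_k − z_k⟫
  − (L/(αγ))(½‖w_k − z_{k−1}‖² + (γ/2)‖w_k − z_k‖²))`. -/
theorem optde_estimation_sequence_inequality
    {d : ℕ} (W : Set (Vec d)) (hWne : W.Nonempty) (hWcl : IsClosed W) (hWcv : Convex ℝ W)
    (F : Vec d → Vec d) (nrm : Vec d → ℝ) (g : Vec d → Vec d)
    (L γ δ α σ : ℝ)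
    -- `nrm` is a norm on ℝ^d
    (hnrm_pos : ∀ x : Vec d, x ≠ 0 → 0 < nrm x)
    (hnrm_add : ∀ x y : Vec d, nrm (x + y) ≤ nrm x + nrm y)
    (hnrm_smul : ∀ (c : ℝ) (x : Vec d), nrm (c • x) = |c| * nrm x)
    (hL : 0 < L) (hγ0 : 0 < γ) (hγ1 : γ ≤ 1) (hδ : 0 < δ) (hσ : 0 ≤ σ)
    -- Assumption 1
    (hLip : ∀ v ∈ W, ∀ u ∈ W, dualNorm nrm (F v - F u) ≤ L * nrm (v - u))
    -- Assumption 2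
    (hgrad : ∀ x : Vec d, HasGradientAt (fun v : Vec d => nrm v ^ 2 / 2) (g x) x)
    (hstrong : ∀ v x : Vec d,
      nrm v ^ 2 / 2 + ⟪g v, x - v⟫ + γ / 2 * nrm (x - v) ^ 2 ≤ nrm x ^ 2 / 2)
    (hgbound : ∀ x : Vec d, dualNorm nrm (g x) ≤ δ * nrm x)
    -- OptDE algorithm with parameter σ
    (hα0 : 0 < α)
    (hαle : α ≤ min (1 / (4 * Real.sqrt 2)) (Real.sqrt 3 / (4 * Real.sqrt γ)))
    (a A : ℕ → ℝ) (hA0 : A 0 = 0)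
    (ha : ∀ k, 1 ≤ k → a k = α * γ * (1 + σ * A (k - 1)) / L)
    (hArec : ∀ k, 1 ≤ k → A k = A (k - 1) + a k)
    (w z : ℕ → Vec d) (hw0W : w 0 ∈ W) (hz0 : z 0 = w 0)
    (hwk : ∀ k, 1 ≤ k → w k ∈ W ∧
      IsMinOn (fun x => (⟪(α / L) • F (w (k - 1)), x⟫ : ℝ) +
        1 / (2 * γ) * nrm (x - z (k - 1)) ^ 2) W (w k))
    (hzk : ∀ k, 1 ≤ k → z k ∈ W ∧
      IsMinOn (fun x =>
        (⟪∑ i ∈ Finset.Icc 1 k, a i • (F (w i) - (σ / γ) • g (w i - w 0)), x⟫ : ℝ) +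
        (1 + σ * A k) / (2 * γ) * nrm (x - w 0) ^ 2) W (z k))
    (K : ℕ) (hK : 1 ≤ K) :
    ∀ u ∈ W,
      (∑ k ∈ Finset.Icc 1 K, a k *
          ((⟪F (w k), w k - u⟫ : ℝ) - σ / γ * breg nrm g (w k - w 0) (u - w 0))) ≤
        (∑ k ∈ Finset.Icc 1 K, a k *
          ((⟪F (w k) + (L / (α * γ)) • g (w k - z (k - 1)), w k - z k⟫ : ℝ) -
            L / (α * γ) * (nrm (w k - z (k - 1)) ^ 2 / 2 + γ / 2 * nrm (w k - z k) ^ 2))) +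
        1 / (2 * γ) * nrm (u - w 0) ^ 2 := by
  have hnrm0 : nrm (0 : Vec d) = 0 := by simpa using hnrm_smul 0 0
  -- facts about A and a
  have hAfact : ∀ k : ℕ, 0 ≤ A k ∧ A k = ∑ i ∈ Finset.Icc 1 k, a i := by
    intro k
    induction k with
    | zero => simp [hA0]
    | succ n ih =>
      have hrec := hArec (n + 1) (by omega)
      have hav := ha (n + 1) (by omega)
      simp only [Nat.add_sub_cancel] at hrec hav
      have h1 : 0 < 1 + σ * A n := by nlinarith [ih.1, hσ, mul_nonneg hσ ih.1]
      have hapos : 0 ≤ a (n + 1) := by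
        rw [hav]
        exact div_nonneg (mul_nonneg (mul_nonneg hα0.le hγ0.le) h1.le) hL.le
      constructor
      · rw [hrec]; linarith [ih.1]
      · rw [Finset.sum_Icc_succ_top (by omega : 1 ≤ n + 1), ← ih.2, hrec]
  have hApos : ∀ k : ℕ, 0 < 1 + σ * A k := by
    intro k
    nlinarith [(hAfact k).1, mul_nonneg hσ (hAfact k).1]
  have hann : ∀ k : ℕ, 0 ≤ a (k + 1) := by
    intro k
    have hav := ha (k + 1) (by omega)
    simp only [Nat.add_sub_cancel] at hav
    rw [hav]
    exact div_nonneg (mul_nonneg (mul_nonneg hα0.le hγ0.le) (hApos k).le) hL.le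
  have haeq : ∀ k : ℕ, a (k + 1) * (L / (α * γ)) = 1 + σ * A k := by
    intro k
    have hav := ha (k + 1) (by omega)
    simp only [Nat.add_sub_cancel] at hav
    rw [hav]
    field_simp
  -- key strong-min property of z k
  have key : ∀ k : ℕ, ∀ x ∈ W,
      (⟪∑ i ∈ Finset.Icc 1 k, a i • (F (w i) - (σ / γ) • g (w i - w 0)), z k⟫ : ℝ)
        + (1 + σ * A k) / (2 * γ) * nrm (z k - w 0) ^ 2
        + (1 + σ * A k) / 2 * nrm (x - z k) ^ 2 ≤
      (⟪∑ i ∈ Finset.Icc 1 k, a i • (F (w i) - (σ / γ) • g (w i - w 0)), x⟫ : ℝ)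
        + (1 + σ * A k) / (2 * γ) * nrm (x - w 0) ^ 2 := by
    intro k
    match k with
    | 0 =>
      intro x hx
      have hempty : Finset.Icc 1 0 = (∅ : Finset ℕ) := by simp
      rw [hempty, Finset.sum_empty, hA0, hz0, sub_self, hnrm0]
      simp only [inner_zero_left]
      have hn := sq_nonneg (nrm (x - w 0))
      have h12 : (1 + σ * 0) / 2 * nrm (x - w 0) ^ 2 ≤
          (1 + σ * 0) / (2 * γ) * nrm (x - w 0) ^ 2 := by
        apply mul_le_mul_of_nonneg_right _ hn
        apply div_le_div_of_nonneg_left (by linarith) (by linarith) (by linarith)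
      linarith [h12]
    | (n + 1) =>
      intro x hx
      have h := strong_min_aux W hWcv nrm g γ hnrm_smul hstrong
        (∑ i ∈ Finset.Icc 1 (n + 1), a i • (F (w i) - (σ / γ) • g (w i - w 0))) (w 0)
        ((1 + σ * A (n + 1)) / (2 * γ))
        (le_of_lt (div_pos (hApos (n + 1)) (by linarith)))
        (z (n + 1)) (hzk (n + 1) (by omega)).1 (hzk (n + 1) (by omega)).2 x hx
      rw [show (1 + σ * A (n + 1)) / (2 * γ) * γ = (1 + σ * A (n + 1)) / 2 by field_simp]
        at h
      linarith [h]
  -- main estimation-sequence induction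
  have main : ∀ k : ℕ,
      (∑ i ∈ Finset.Icc 1 k, ((⟪a i • (F (w i) - (σ / γ) • g (w i - w 0)), w i⟫ : ℝ)
          + σ * a i / (2 * γ) * nrm (w i - w 0) ^ 2)) ≤
      ((⟪∑ i ∈ Finset.Icc 1 k, a i • (F (w i) - (σ / γ) • g (w i - w 0)), z k⟫ : ℝ)
        + (1 + σ * A k) / (2 * γ) * nrm (z k - w 0) ^ 2)
        + ∑ i ∈ Finset.Icc 1 k, a i *
          ((⟪F (w i) + (L / (α * γ)) • g (w i - z (i - 1)), w i - z i⟫ : ℝ) -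
            L / (α * γ) * (nrm (w i - z (i - 1)) ^ 2 / 2 + γ / 2 * nrm (w i - z i) ^ 2)) := by
    intro k
    induction k with
    | zero =>
      have hempty : Finset.Icc 1 0 = (∅ : Finset ℕ) := by simp
      rw [hempty]
      simp [hz0, hA0, sub_self, hnrm0]
    | succ n ih =>
      have h1n : (1 : ℕ) ≤ n + 1 := by omega
      have hrec := hArec (n + 1) h1n
      simp only [Nat.add_sub_cancel] at hrec
      rw [Finset.sum_Icc_succ_top h1n, Finset.sum_Icc_succ_top h1n,
        Finset.sum_Icc_succ_top h1n]
      simp only [Nat.add_sub_cancel]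
      -- split ψ_{n+1}(z_{n+1})
      have hsplit : (⟪(∑ i ∈ Finset.Icc 1 n, a i • (F (w i) - (σ / γ) • g (w i - w 0)))
            + a (n + 1) • (F (w (n + 1)) - (σ / γ) • g (w (n + 1) - w 0)), z (n + 1)⟫ : ℝ)
          + (1 + σ * A (n + 1)) / (2 * γ) * nrm (z (n + 1) - w 0) ^ 2 =
          ((⟪∑ i ∈ Finset.Icc 1 n, a i • (F (w i) - (σ / γ) • g (w i - w 0)), z (n + 1)⟫ : ℝ)
            + (1 + σ * A n) / (2 * γ) * nrm (z (n + 1) - w 0) ^ 2)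
          + ((⟪a (n + 1) • (F (w (n + 1)) - (σ / γ) • g (w (n + 1) - w 0)), z (n + 1)⟫ : ℝ)
            + σ * a (n + 1) / (2 * γ) * nrm (z (n + 1) - w 0) ^ 2) := by
        rw [inner_add_left, hrec]; ring
      have hkey := key n (z (n + 1)) (hzk (n + 1) h1n).1
      -- the one-step inequality
      have star : (⟪a (n + 1) • (F (w (n + 1)) - (σ / γ) • g (w (n + 1) - w 0)), w (n + 1)⟫ : ℝ)
          + σ * a (n + 1) / (2 * γ) * nrm (w (n + 1) - w 0) ^ 2 ≤
          (1 + σ * A n) / 2 * nrm (z (n + 1) - z n) ^ 2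
          + ((⟪a (n + 1) • (F (w (n + 1)) - (σ / γ) • g (w (n + 1) - w 0)), z (n + 1)⟫ : ℝ)
            + σ * a (n + 1) / (2 * γ) * nrm (z (n + 1) - w 0) ^ 2)
          + a (n + 1) *
            ((⟪F (w (n + 1)) + (L / (α * γ)) • g (w (n + 1) - z n), w (n + 1) - z (n + 1)⟫ : ℝ) -
              L / (α * γ) * (nrm (w (n + 1) - z n) ^ 2 / 2
                + γ / 2 * nrm (w (n + 1) - z (n + 1)) ^ 2)) := by
        have hsym : nrm (z (n + 1) - w (n + 1)) = nrm (w (n + 1) - z (n + 1)) := by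
          rw [show z (n + 1) - w (n + 1) = (-1 : ℝ) • (w (n + 1) - z (n + 1)) by module,
            hnrm_smul]
          norm_num
        have h1 := hstrong (w (n + 1) - w 0) (z (n + 1) - w 0)
        rw [show z (n + 1) - w 0 - (w (n + 1) - w 0) = z (n + 1) - w (n + 1) by module] at h1
        have h2 := hstrong (w (n + 1) - z n) (z (n + 1) - z n)
        rw [show z (n + 1) - z n - (w (n + 1) - z n) = z (n + 1) - w (n + 1) by module,
          hsym] at h2
        have h1w : nrm (w (n + 1) - w 0) ^ 2 / 2
            + ⟪g (w (n + 1) - w 0), z (n + 1) - w (n + 1)⟫ ≤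
            nrm (z (n + 1) - w 0) ^ 2 / 2 := by
          nlinarith [h1, mul_nonneg (by linarith : (0:ℝ) ≤ γ / 2)
            (sq_nonneg (nrm (z (n + 1) - w (n + 1))))]
        have hc1 : (0:ℝ) ≤ σ * a (n + 1) / γ :=
          div_nonneg (mul_nonneg hσ (hann n)) hγ0.le
        have scaled1 := mul_le_mul_of_nonneg_left h1w hc1
        have scaled2 := mul_le_mul_of_nonneg_left h2 (hApos n).le
        have hE : a (n + 1) *
            ((⟪F (w (n + 1)) + (L / (α * γ)) • g (w (n + 1) - z n), w (n + 1) - z (n + 1)⟫ : ℝ) -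
              L / (α * γ) * (nrm (w (n + 1) - z n) ^ 2 / 2
                + γ / 2 * nrm (w (n + 1) - z (n + 1)) ^ 2)) =
            a (n + 1) * ⟪F (w (n + 1)), w (n + 1) - z (n + 1)⟫
            + (1 + σ * A n) * ⟪g (w (n + 1) - z n), w (n + 1) - z (n + 1)⟫
            - (1 + σ * A n) * (nrm (w (n + 1) - z n) ^ 2 / 2
                + γ / 2 * nrm (w (n + 1) - z (n + 1)) ^ 2) := by
          simp only [inner_add_left, real_inner_smul_left]
          linear_combination ((⟪g (w (n + 1) - z n), w (n + 1) - z (n + 1)⟫ : ℝ) -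
            (nrm (w (n + 1) - z n) ^ 2 / 2 + γ / 2 * nrm (w (n + 1) - z (n + 1)) ^ 2)) *
            haeq n
        rw [hE]
        simp only [inner_sub_left, inner_sub_right, real_inner_smul_left,
          real_inner_smul_right] at scaled1 scaled2 ⊢
        ring_nf at scaled1 scaled2 ⊢
        linarith [scaled1, scaled2]
      linarith [ih, hkey, hsplit, star]
  -- final assembly
  intro u hu
  have hterm : ∀ i ∈ Finset.Icc 1 K,
      a i * ((⟪F (w i), w i - u⟫ : ℝ) - σ / γ * breg nrm g (w i - w 0) (u - w 0)) =
      ((⟪a i • (F (w i) - (σ / γ) • g (w i - w 0)), w i⟫ : ℝ)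
        + σ * a i / (2 * γ) * nrm (w i - w 0) ^ 2)
      - ((⟪a i • (F (w i) - (σ / γ) • g (w i - w 0)), u⟫ : ℝ)
        + σ * a i / (2 * γ) * nrm (u - w 0) ^ 2) := by
    intro i _
    simp only [breg]
    rw [show u - w 0 - (w i - w 0) = u - w i by module]
    simp only [inner_sub_left, inner_sub_right, real_inner_smul_left, real_inner_smul_right]
    ring
  rw [Finset.sum_congr rfl hterm, Finset.sum_sub_distrib]
  have hsum2 : (∑ i ∈ Finset.Icc 1 K,
      ((⟪a i • (F (w i) - (σ / γ) • g (w i - w 0)), u⟫ : ℝ)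
        + σ * a i / (2 * γ) * nrm (u - w 0) ^ 2)) =
      (⟪∑ i ∈ Finset.Icc 1 K, a i • (F (w i) - (σ / γ) • g (w i - w 0)), u⟫ : ℝ)
        + σ * A K / (2 * γ) * nrm (u - w 0) ^ 2 := by
    rw [Finset.sum_add_distrib, ← sum_inner]
    congr 1
    calc (∑ i ∈ Finset.Icc 1 K, σ * a i / (2 * γ) * nrm (u - w 0) ^ 2)
        = ∑ i ∈ Finset.Icc 1 K, a i * (σ / (2 * γ) * nrm (u - w 0) ^ 2) :=
          Finset.sum_congr rfl (fun i _ => by ring)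
      _ = (∑ i ∈ Finset.Icc 1 K, a i) * (σ / (2 * γ) * nrm (u - w 0) ^ 2) := by
          rw [← Finset.sum_mul]
      _ = σ * A K / (2 * γ) * nrm (u - w 0) ^ 2 := by
          rw [← (hAfact K).2]; ring
  rw [hsum2]
  have h1 := main K
  have hmin := isMinOn_iff.mp (hzk K hK).2 u hu
  have e1 : (1 + σ * A K) / (2 * γ) * nrm (u - w 0) ^ 2 =
      1 / (2 * γ) * nrm (u - w 0) ^ 2 + σ * A K / (2 * γ) * nrm (u - w 0) ^ 2 := by ring
  linarith [h1, hmin, e1]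
end

section
/- Lemma (stochastic estimation-sequence inequality for SOptDE): Suppose Assumptions 1, 2 and 5 hold and run the SOptDE algorithm (with parameter σ ≥ 0). For each k ∈ [K] and u ∈ 𝒲 define E_{2k} := a_k ( ⟨F(w_k;ξ_k) + (L²a_k/(αγ)²) ∇_{w_k} ½‖w_k − z_{k−1}‖², w_k − z_k⟩ − (L²a_k/(αγ)²) ( ½‖w_k − z_{k−1}‖² + (γ/2)‖w_k − z_k‖² ) ) + a_k ⟨F(w_k) − F(w_k;ξ_k), w_k − u⟩. Then for every u ∈ 𝒲, E[ Σ_{k=1}^{K} a_k ( ⟨F(w_k), w_k − u⟩ − (σ/γ) V_{w_k − w_0}(u − w_0) ) ] ≤ E[ Σ_{k=1}^{K} E_{2k} ] + (1/(2γ))‖u − w_0‖², where the expectation is over all randomness of the algorithm. -/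
open scoped RealInnerProductSpace
open Finset MeasureTheory

/-!
Let `ψ_k(x) = ⟪S_k, x⟫ + (1 + σA_k)/(2γ) · nrm(x − w₀)²` be the function minimized by `z_k`
and `ℓ_k(x) = ⟪F(w_k;ξ_k) − (σ/γ) g(w_k − w₀), x⟫ + σ/(2γ) · nrm(x − w₀)²`, so that
`ψ_k = ψ_{k−1} + a_k ℓ_k` and
`⟪F(w_k), w_k − u⟫ − (σ/γ) V_{w_k−w₀}(u − w₀) = ⟪F(w_k) − F(w_k;ξ_k), w_k − u⟫ + ℓ_k(w_k) − ℓ_k(u)`.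
Strong convexity of `½ nrm²` makes `ψ_{k−1}` grow at least like
`(1 + σA_{k−1})/2 · nrm(x − z_{k−1})²` away from its minimizer over `W`. Because the step size
satisfies `a_k · L²a_k/(αγ)² = 1 + σA_{k−1}`, this growth pays for the optimistic step:
`a_k ℓ_k(w_k) − E_k ≤ ψ_k(z_k) − ψ_{k−1}(z_{k−1})`, where `E_k` is the first part of `E_{2k}`.
Telescoping and `ψ_K(z_K) ≤ ψ_K(u) = nrm(u − w₀)²/(2γ) + Σ_k a_k ℓ_k(u)` give the inequality
for every `ω`, and integrating it gives the claim.
-/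

open Filter Topology

theorem IsMinOn.add_le_of_forall_smul_add_smul_le {F : Type*} [AddCommGroup F] [Module ℝ F]
    {Φ : F → ℝ} {W : Set F} {z x : F} {c : ℝ} (hW : Convex ℝ W) (hmin : IsMinOn Φ W z)
    (hz : z ∈ W) (hx : x ∈ W)
    (hΦ : ∀ t ∈ Set.Ioc (0 : ℝ) 1,
      Φ ((1 - t) • z + t • x) ≤ (1 - t) * Φ z + t * Φ x - t * (1 - t) * c) :
    Φ z + c ≤ Φ x := by
  have hpos : ∀ t ∈ Set.Ioc (0 : ℝ) 1, Φ z + (1 - t) * c ≤ Φ x := by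
    rintro t ⟨ht0, ht1⟩
    have hle : Φ z ≤ Φ ((1 - t) • z + t • x) :=
      hmin (hW hz hx (sub_nonneg.2 ht1) ht0.le (by ring))
    have hmul : t * (Φ z + (1 - t) * c) ≤ t * Φ x := by linarith [hΦ t ⟨ht0, ht1⟩]
    exact le_of_mul_le_mul_left hmul ht0
  have hlim : Tendsto (fun t : ℝ => Φ z + (1 - t) * c) (𝓝[>] 0) (𝓝 (Φ z + c)) := by
    refine tendsto_nhdsWithin_of_tendsto_nhds ?_
    have hcont : Continuous fun t : ℝ => Φ z + (1 - t) * c := by fun_prop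
    simpa using hcont.tendsto 0
  exact le_of_tendsto hlim (eventually_of_mem (Ioc_mem_nhdsGT one_pos) hpos)

section StrongConvexity

variable {E : Type*} [NormedAddCommGroup E] [InnerProductSpace ℝ E] {nrm : E → ℝ} {g : E → E}
  {γ : ℝ}

theorem nrm_sub_comm (hsmul : ∀ (c : ℝ) (x : E), nrm (c • x) = |c| * nrm x) (x y : E) :
    nrm (x - y) = nrm (y - x) := by
  simpa [neg_sub] using (hsmul (-1) (x - y)).symm

theorem sq_nrm_smul_add_smul_le (hsmul : ∀ (c : ℝ) (x : E), nrm (c • x) = |c| * nrm x)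
    (hstrong : ∀ v x : E, nrm v ^ 2 / 2 + ⟪g v, x - v⟫ + γ / 2 * nrm (x - v) ^ 2 ≤ nrm x ^ 2 / 2)
    (x y : E) {t : ℝ} (ht0 : 0 ≤ t) (ht1 : t ≤ 1) :
    nrm ((1 - t) • x + t • y) ^ 2 ≤
      (1 - t) * nrm x ^ 2 + t * nrm y ^ 2 - γ * t * (1 - t) * nrm (y - x) ^ 2 := by
  set m := (1 - t) • x + t • y
  have hx := hstrong m x
  have hy := hstrong m y
  rw [show x - m = (-t) • (y - x) by module, hsmul, abs_neg, abs_of_nonneg ht0,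
    real_inner_smul_right] at hx
  rw [show y - m = (1 - t) • (y - x) by module, hsmul, abs_of_nonneg (sub_nonneg.2 ht1),
    real_inner_smul_right] at hy
  linarith [mul_le_mul_of_nonneg_left hx (sub_nonneg.2 ht1), mul_le_mul_of_nonneg_left hy ht0]

theorem IsMinOn.inner_add_sq_nrm_growth (hsmul : ∀ (c : ℝ) (x : E), nrm (c • x) = |c| * nrm x)
    (hstrong : ∀ v x : E, nrm v ^ 2 / 2 + ⟪g v, x - v⟫ + γ / 2 * nrm (x - v) ^ 2 ≤ nrm x ^ 2 / 2)
    (hγ : 0 < γ) {W : Set E} (hW : Convex ℝ W) {S p z x : E} {β : ℝ} (hβ : 0 ≤ β)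
    (hmin : IsMinOn (fun y => ⟪S, y⟫ + β / (2 * γ) * nrm (y - p) ^ 2) W z) (hz : z ∈ W)
    (hx : x ∈ W) :
    ⟪S, z⟫ + β / (2 * γ) * nrm (z - p) ^ 2 + β / 2 * nrm (x - z) ^ 2 ≤
      ⟪S, x⟫ + β / (2 * γ) * nrm (x - p) ^ 2 := by
  refine hmin.add_le_of_forall_smul_add_smul_le hW hz hx fun t ⟨ht0, ht1⟩ => ?_
  have hseg := sq_nrm_smul_add_smul_le hsmul hstrong (z - p) (x - p) ht0.le ht1
  rw [sub_sub_sub_cancel_right] at hseg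
  have hscale : β / (2 * γ) * (γ * t * (1 - t) * nrm (x - z) ^ 2) =
      t * (1 - t) * (β / 2 * nrm (x - z) ^ 2) := by
    field_simp
  rw [show (1 - t) • z + t • x - p = (1 - t) • (z - p) + t • (x - p) by module,
    inner_add_right, real_inner_smul_right, real_inner_smul_right]
  linarith [mul_le_mul_of_nonneg_left hseg (by positivity : 0 ≤ β / (2 * γ))]

end StrongConvexity

section EstimationSequence

variable {E : Type*} [NormedAddCommGroup E] [InnerProductSpace ℝ E] (nrm : E → ℝ) (g : E → E)
  (γ σ : ℝ)

/-- `ℓ_k`, with `q = F(w_k; ξ_k)` and `w = w_k`. -/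
noncomputable def lowerModel (w0 q w x : E) : ℝ :=
  ⟪q - (σ / γ) • g (w - w0), x⟫ + σ / (2 * γ) * nrm (x - w0) ^ 2

/-- `E_k`, with `c = L² a_k / (αγ)²`, `z = z_{k−1}` and `z' = z_k`. -/
noncomputable def stepError (a c : ℝ) (q w z z' : E) : ℝ :=
  a * (⟪q + c • g (w - z), w - z'⟫ - c * (nrm (w - z) ^ 2 / 2 + γ / 2 * nrm (w - z') ^ 2))

noncomputable def estimationSeq (a A : ℕ → ℝ) (q w : ℕ → E) (w0 : E) (k : ℕ) (x : E) : ℝ :=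
  ⟪∑ i ∈ Icc 1 k, a i • (q i - (σ / γ) • g (w i - w0)), x⟫ +
    (1 + σ * A k) / (2 * γ) * nrm (x - w0) ^ 2

variable {nrm g γ σ}

theorem estimationSeq_eq {a A : ℕ → ℝ} {k : ℕ} (hA : A k = ∑ i ∈ Icc 1 k, a i) (q w : ℕ → E)
    (w0 x : E) :
    estimationSeq nrm g γ σ a A q w w0 k x =
      1 / (2 * γ) * nrm (x - w0) ^ 2 +
        ∑ i ∈ Icc 1 k, a i * lowerModel nrm g γ σ w0 (q i) (w i) x := by
  simp only [estimationSeq, lowerModel, sum_inner, real_inner_smul_left, mul_add, sum_add_distrib,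
    hA, ← sum_mul]
  ring

theorem estimationSeq_succ {a A : ℕ → ℝ} (hA : ∀ k, A k = ∑ i ∈ Icc 1 k, a i) (q w : ℕ → E)
    (w0 : E) (k : ℕ) (x : E) :
    estimationSeq nrm g γ σ a A q w w0 (k + 1) x =
      estimationSeq nrm g γ σ a A q w w0 k x +
        a (k + 1) * lowerModel nrm g γ σ w0 (q (k + 1)) (w (k + 1)) x := by
  rw [estimationSeq_eq (hA _), estimationSeq_eq (hA _), sum_Icc_succ_top (by omega)]
  ring

theorem IsMinOn.estimationSeq_growth
    (hsmul : ∀ (c : ℝ) (x : E), nrm (c • x) = |c| * nrm x)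
    (hstrong : ∀ v x : E, nrm v ^ 2 / 2 + ⟪g v, x - v⟫ + γ / 2 * nrm (x - v) ^ 2 ≤ nrm x ^ 2 / 2)
    (hγ : 0 < γ) {W : Set E} (hW : Convex ℝ W) {a A : ℕ → ℝ} {q w : ℕ → E} {w0 z x : E}
    {k : ℕ} (hβ : 0 ≤ 1 + σ * A k) (hmin : IsMinOn (estimationSeq nrm g γ σ a A q w w0 k) W z)
    (hz : z ∈ W) (hx : x ∈ W) :
    estimationSeq nrm g γ σ a A q w w0 k z + (1 + σ * A k) / 2 * nrm (x - z) ^ 2 ≤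
      estimationSeq nrm g γ σ a A q w w0 k x :=
  hmin.inner_add_sq_nrm_growth hsmul hstrong hγ hW hβ hz hx

theorem lowerModel_sub_le
    (hstrong : ∀ v x : E, nrm v ^ 2 / 2 + ⟪g v, x - v⟫ + γ / 2 * nrm (x - v) ^ 2 ≤ nrm x ^ 2 / 2)
    (hγ : 0 < γ) (hσ : 0 ≤ σ) (w0 q w x : E) :
    lowerModel nrm g γ σ w0 q w w - lowerModel nrm g γ σ w0 q w x ≤ ⟪q, w - x⟫ := by
  have h := hstrong (w - w0) (x - w0)
  rw [sub_sub_sub_cancel_right] at h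
  have hslack : 0 ≤ σ / γ * (γ / 2 * nrm (x - w) ^ 2) := by positivity
  simp only [lowerModel, inner_sub_left, inner_sub_right, real_inner_smul_left] at h ⊢
  linear_combination (σ / γ) * h + hslack

theorem stepError_ge
    (hsmul : ∀ (c : ℝ) (x : E), nrm (c • x) = |c| * nrm x)
    (hstrong : ∀ v x : E, nrm v ^ 2 / 2 + ⟪g v, x - v⟫ + γ / 2 * nrm (x - v) ^ 2 ≤ nrm x ^ 2 / 2)
    (hγ : 0 < γ) (hσ : 0 ≤ σ) {a c : ℝ} (ha : 0 ≤ a) (hac : 0 ≤ a * c) (w0 q w z z' : E) :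
    a * lowerModel nrm g γ σ w0 q w w - stepError nrm g γ a c q w z z' ≤
      a * c / 2 * nrm (z' - z) ^ 2 + a * lowerModel nrm g γ σ w0 q w z' := by
  have hmodel := mul_le_mul_of_nonneg_left (lowerModel_sub_le hstrong hγ hσ w0 q w z') ha
  have h := hstrong (w - z) (z' - z)
  rw [sub_sub_sub_cancel_right, nrm_sub_comm hsmul z' w] at h
  simp only [stepError, inner_add_left, real_inner_smul_left]
  rw [← neg_sub w z', inner_neg_right] at h
  linear_combination hmodel + (a * c) * h

end EstimationSequence

theorem inner_sub_breg_eq {d : ℕ} (nrm : Vec d → ℝ) (g : Vec d → Vec d) (γ σ : ℝ)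
    (f q w w0 u : Vec d) :
    ⟪f, w - u⟫ - σ / γ * breg nrm g (w - w0) (u - w0) =
      ⟪f - q, w - u⟫ + (lowerModel nrm g γ σ w0 q w w - lowerModel nrm g γ σ w0 q w u) := by
  simp only [breg, lowerModel, sub_sub_sub_cancel_right, inner_sub_left, inner_sub_right,
    real_inner_smul_left]
  ring

theorem one_add_mul_sum_Icc_nonneg {σ : ℝ} {a : ℕ → ℝ} (hσ : 0 ≤ σ) (ha : ∀ k, 1 ≤ k → 0 ≤ a k)
    (k : ℕ) : 0 ≤ 1 + σ * ∑ i ∈ Icc 1 k, a i := by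
  have := sum_nonneg fun i (hi : i ∈ Icc 1 k) => ha i (mem_Icc.1 hi).1
  positivity

theorem sum_weighted_gap_le_sum_stepError {d : ℕ} {W : Set (Vec d)} (hW : Convex ℝ W)
    {nrm : Vec d → ℝ} {g : Vec d → Vec d} {γ σ : ℝ}
    (hsmul : ∀ (c : ℝ) (x : Vec d), nrm (c • x) = |c| * nrm x)
    (hstrong : ∀ v x : Vec d,
      nrm v ^ 2 / 2 + ⟪g v, x - v⟫ + γ / 2 * nrm (x - v) ^ 2 ≤ nrm x ^ 2 / 2)
    (hγ : 0 < γ) (hσ : 0 ≤ σ) {a A c : ℕ → ℝ} (ha : ∀ k, 1 ≤ k → 0 ≤ a k)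
    (hA : ∀ k, A k = ∑ i ∈ Icc 1 k, a i) (hac : ∀ k, 1 ≤ k → a k * c k = 1 + σ * A (k - 1))
    (F : Vec d → Vec d) {q w z : ℕ → Vec d} {w0 : Vec d} (hw0 : w0 ∈ W) (hz0 : z 0 = w0)
    (hz : ∀ k, 1 ≤ k → z k ∈ W ∧ IsMinOn (estimationSeq nrm g γ σ a A q w w0 k) W (z k))
    (K : ℕ) {u : Vec d} (hu : u ∈ W) :
    ∑ k ∈ Icc 1 K, a k * (⟪F (w k), w k - u⟫ - σ / γ * breg nrm g (w k - w0) (u - w0)) ≤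
      ∑ k ∈ Icc 1 K, (stepError nrm g γ (a k) (c k) (q k) (w k) (z (k - 1)) (z k) +
        a k * ⟪F (w k) - q k, w k - u⟫) + 1 / (2 * γ) * nrm (u - w0) ^ 2 := by
  set ψ := estimationSeq nrm g γ σ a A q w w0
  set ℓ := fun k x => lowerModel nrm g γ σ w0 (q k) (w k) x
  have hψ : ∀ k x, ψ k x = 1 / (2 * γ) * nrm (x - w0) ^ 2 + ∑ i ∈ Icc 1 k, a i * ℓ i x :=
    fun k => estimationSeq_eq (hA k) q w w0
  have hψ_succ : ∀ k x, ψ (k + 1) x = ψ k x + a (k + 1) * ℓ (k + 1) x :=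
    estimationSeq_succ hA q w w0
  have hnrm0 : nrm 0 = 0 := by simpa using hsmul 0 0
  have hψ0 : ∀ x, ψ 0 x = 1 / (2 * γ) * nrm (x - w0) ^ 2 := fun x => by simp [hψ]
  have hψ0_z0 : ψ 0 (z 0) = 0 := by simp [hψ0, hz0, hnrm0]
  have hβ : ∀ k, 0 ≤ 1 + σ * A k := fun k => hA k ▸ one_add_mul_sum_Icc_nonneg hσ ha k
  have hmin : ∀ k, z k ∈ W ∧ IsMinOn (ψ k) W (z k)
    | 0 => ⟨hz0 ▸ hw0, isMinOn_iff.2 fun x _ => by rw [hψ0_z0, hψ0]; positivity⟩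
    | k + 1 => hz (k + 1) (by omega)
  have hclaim : ∀ N, ∑ k ∈ Icc 1 N, (a k * ℓ k (w k) -
      stepError nrm g γ (a k) (c k) (q k) (w k) (z (k - 1)) (z k)) ≤ ψ N (z N) := by
    intro N
    induction N with
    | zero => simp [hψ0_z0]
    | succ n ih =>
      have hgrow := (hmin n).2.estimationSeq_growth hsmul hstrong hγ hW (hβ n) (hmin n).1
        (hmin (n + 1)).1
      have hstep := stepError_ge hsmul hstrong hγ hσ (ha (n + 1) (by omega))
        ((hac (n + 1) (by omega)).symm ▸ hβ n) w0 (q (n + 1)) (w (n + 1)) (z n) (z (n + 1))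
      rw [hac (n + 1) (by omega), Nat.add_sub_cancel] at hstep
      rw [sum_Icc_succ_top (by omega), hψ_succ, Nat.add_sub_cancel]
      linarith
  calc _ = ∑ k ∈ Icc 1 K, (stepError nrm g γ (a k) (c k) (q k) (w k) (z (k - 1)) (z k) +
          a k * ⟪F (w k) - q k, w k - u⟫) +
        (∑ k ∈ Icc 1 K, (a k * ℓ k (w k) -
          stepError nrm g γ (a k) (c k) (q k) (w k) (z (k - 1)) (z k)) -
          ∑ k ∈ Icc 1 K, a k * ℓ k u) := by
        rw [← sum_sub_distrib, ← sum_add_distrib]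
        refine sum_congr rfl fun k _ => ?_
        rw [inner_sub_breg_eq nrm g γ σ _ (q k)]
        ring
    _ ≤ _ + (ψ K u - ∑ k ∈ Icc 1 K, a k * ℓ k u) := by
        gcongr
        exact (hclaim K).trans ((hmin K).2 hu)
    _ = _ := by
        rw [hψ]
        ring

theorem eq_sum_Icc_of_eq_add {M : Type*} [AddCommMonoid M] {a A : ℕ → M} (h0 : A 0 = 0)
    (hrec : ∀ k, 1 ≤ k → A k = A (k - 1) + a k) : ∀ k, A k = ∑ i ∈ Icc 1 k, a i
  | 0 => by simp [h0]
  | k + 1 => by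
    rw [sum_Icc_succ_top (by omega), ← eq_sum_Icc_of_eq_add h0 hrec k, hrec (k + 1) (by omega),
      Nat.add_sub_cancel]

theorem mul_sq_div_sq_of_eq_mul_sqrt_div {a b x L : ℝ} (hL : L ≠ 0) (hb : b ≠ 0) (hx : 0 ≤ x)
    (ha : a = b * √x / L) : a * (L ^ 2 * a / b ^ 2) = x := by
  subst ha
  field_simp
  rw [Real.sq_sqrt hx]

theorem integral_le_integral_add_of_le_add {Ω : Type*} [MeasurableSpace Ω] {μ : Measure Ω}
    [IsProbabilityMeasure μ] {f g : Ω → ℝ} {C : ℝ} (hf : Integrable f μ) (hg : Integrable g μ)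
    (h : ∀ ω, f ω ≤ g ω + C) : ∫ ω, f ω ∂μ ≤ ∫ ω, g ω ∂μ + C := by
  calc ∫ ω, f ω ∂μ ≤ ∫ ω, (g ω + C) ∂μ := integral_mono hf (hg.add (integrable_const C)) h
    _ = ∫ ω, g ω ∂μ + C := by
      rw [integral_add hg (integrable_const C), integral_const, probReal_univ, one_smul]

theorem soptde_estimation_sequence_inequality_general
    {d : ℕ} {Ξ : Type}
    {Ω : Type} [MeasurableSpace Ω] (μ : Measure Ω) [IsProbabilityMeasure μ]
    (ξ : ℕ → Ω → Ξ)
    (W : Set (Vec d)) (hWcv : Convex ℝ W)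
    (F : Vec d → Vec d) (nrm : Vec d → ℝ) (g : Vec d → Vec d)
    (L γ α σ : ℝ)
    -- `nrm` is a norm on ℝ^d
    (hnrm_smul : ∀ (c : ℝ) (x : Vec d), nrm (c • x) = |c| * nrm x)
    (hL : 0 < L) (hγ0 : 0 < γ) (hσ : 0 ≤ σ)
    -- Assumption 2
    (hstrong : ∀ v x : Vec d,
      nrm v ^ 2 / 2 + ⟪g v, x - v⟫ + γ / 2 * nrm (x - v) ^ 2 ≤ nrm x ^ 2 / 2)
    (Fs : Vec d → Ξ → Vec d)
    -- SOptDE algorithm with σ = 0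
    (hα : α = min (γ / 32) (1 / 16))
    (a A : ℕ → ℝ) (hA0 : A 0 = 0)
    (ha : ∀ k, 1 ≤ k → a k = α * γ * Real.sqrt (1 + σ * A (k - 1)) / L)
    (hArec : ∀ k, 1 ≤ k → A k = A (k - 1) + a k)
    (w z : ℕ → Ω → Vec d) (w0 : Vec d) (hw0W : w0 ∈ W)
    (hz0 : ∀ ω, z 0 ω = w0)
    (hzk : ∀ k, 1 ≤ k → ∀ ω, z k ω ∈ W ∧
      IsMinOn (fun x =>
        (⟪∑ i ∈ Finset.Icc 1 k, a i • (Fs (w i ω) (ξ i ω) - (σ / γ) • g (w i ω - w0)),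
          x⟫ : ℝ) +
        (1 + σ * A k) / (2 * γ) * nrm (x - w0) ^ 2) W (z k ω))
    (K : ℕ) :
    ∀ u ∈ W,
      Integrable (fun ω => ∑ k ∈ Finset.Icc 1 K, a k *
        ((⟪F (w k ω), w k ω - u⟫ : ℝ) - σ / γ * breg nrm g (w k ω - w0) (u - w0))) μ →
      Integrable (fun ω => ∑ k ∈ Finset.Icc 1 K,
        (a k * ((⟪Fs (w k ω) (ξ k ω) +
              (L ^ 2 * a k / (α * γ) ^ 2) • g (w k ω - z (k - 1) ω), w k ω - z k ω⟫ : ℝ) -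
            L ^ 2 * a k / (α * γ) ^ 2 *
              (nrm (w k ω - z (k - 1) ω) ^ 2 / 2 + γ / 2 * nrm (w k ω - z k ω) ^ 2)) +
          a k * (⟪F (w k ω) - Fs (w k ω) (ξ k ω), w k ω - u⟫ : ℝ))) μ →
      (∫ ω, (∑ k ∈ Finset.Icc 1 K, a k *
          ((⟪F (w k ω), w k ω - u⟫ : ℝ) - σ / γ * breg nrm g (w k ω - w0) (u - w0))) ∂μ) ≤
        (∫ ω, (∑ k ∈ Finset.Icc 1 K,
          (a k * ((⟪Fs (w k ω) (ξ k ω) +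
                (L ^ 2 * a k / (α * γ) ^ 2) • g (w k ω - z (k - 1) ω), w k ω - z k ω⟫ : ℝ) -
              L ^ 2 * a k / (α * γ) ^ 2 *
                (nrm (w k ω - z (k - 1) ω) ^ 2 / 2 + γ / 2 * nrm (w k ω - z k ω) ^ 2)) +
            a k * (⟪F (w k ω) - Fs (w k ω) (ξ k ω), w k ω - u⟫ : ℝ))) ∂μ) +
        1 / (2 * γ) * nrm (u - w0) ^ 2 := by
  intro u hu hint₁ hint₂
  have hαγ : α * γ ≠ 0 := by rw [hα]; positivity
  have ha₀ : ∀ k, 1 ≤ k → 0 ≤ a k := fun k hk => by rw [ha k hk, hα]; positivity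
  have hA : ∀ k, A k = ∑ i ∈ Icc 1 k, a i := eq_sum_Icc_of_eq_add hA0 hArec
  have hac : ∀ k, 1 ≤ k → a k * (L ^ 2 * a k / (α * γ) ^ 2) = 1 + σ * A (k - 1) :=
    fun k hk => mul_sq_div_sq_of_eq_mul_sqrt_div hL.ne' hαγ
      (hA (k - 1) ▸ one_add_mul_sum_Icc_nonneg hσ ha₀ (k - 1)) (ha k hk)
  refine integral_le_integral_add_of_le_add hint₁ hint₂ fun ω => ?_
  exact sum_weighted_gap_le_sum_stepError hWcv hnrm_smul hstrong hγ0 hσ ha₀ hA hac F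
    (q := fun k => Fs (w k ω) (ξ k ω)) (w := fun k => w k ω) hw0W (hz0 ω)
    (fun k hk => hzk k hk ω) K hu

/-- **Lemma (stochastic estimation-sequence inequality for SOptDE).**
Under Assumptions 1, 2 and 5, running SOptDE with parameter `σ ≥ 0`, for every `u ∈ W`
(assuming both expectations exist),
`E[Σ_{k=1}^K a_k (⟪F(w_k), w_k − u⟫ − (σ/γ) V_{w_k − w₀}(u − w₀))]
  ≤ E[Σ_{k=1}^K E_{2k}] + (1/(2γ))‖u − w₀‖²`,
where `E_{2k} = a_k (⟪F(w_k;ξ_k) + (L²a_k/(αγ)²) ∇½‖w_k − z_{k−1}‖², w_k − z_k⟫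
  − (L²a_k/(αγ)²)(½‖w_k − z_{k−1}‖² + (γ/2)‖w_k − z_k‖²))
  + a_k ⟪F(w_k) − F(w_k;ξ_k), w_k − u⟫`. -/
theorem soptde_estimation_sequence_inequality
    {d : ℕ} {Ξ : Type} [MeasurableSpace Ξ]
    {Ω : Type} [MeasurableSpace Ω] (μ : Measure Ω) [IsProbabilityMeasure μ]
    (ν : Measure Ξ) [IsProbabilityMeasure ν]
    -- ξ₀, ξ₁, … are i.i.d. with common law ν
    (ξ : ℕ → Ω → Ξ) (hξmeas : ∀ k, Measurable (ξ k))
    (hξindep : ProbabilityTheory.iIndepFun ξ μ)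
    (hξdist : ∀ k, μ.map (ξ k) = ν)
    (W : Set (Vec d)) (hWne : W.Nonempty) (hWcl : IsClosed W) (hWcv : Convex ℝ W)
    (F : Vec d → Vec d) (nrm : Vec d → ℝ) (g : Vec d → Vec d)
    (L γ δ α s σ : ℝ)
    -- `nrm` is a norm on ℝ^d
    (hnrm_pos : ∀ x : Vec d, x ≠ 0 → 0 < nrm x)
    (hnrm_add : ∀ x y : Vec d, nrm (x + y) ≤ nrm x + nrm y)
    (hnrm_smul : ∀ (c : ℝ) (x : Vec d), nrm (c • x) = |c| * nrm x)
    (hL : 0 < L) (hγ0 : 0 < γ) (hγ1 : γ ≤ 1) (hδ : 0 < δ) (hs : 0 ≤ s) (hσ : 0 ≤ σ)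
    -- Assumption 1
    (hLip : ∀ v ∈ W, ∀ u ∈ W, dualNorm nrm (F v - F u) ≤ L * nrm (v - u))
    -- Assumption 2
    (hgrad : ∀ x : Vec d, HasGradientAt (fun v : Vec d => nrm v ^ 2 / 2) (g x) x)
    (hstrong : ∀ v x : Vec d,
      nrm v ^ 2 / 2 + ⟪g v, x - v⟫ + γ / 2 * nrm (x - v) ^ 2 ≤ nrm x ^ 2 / 2)
    (hgbound : ∀ x : Vec d, dualNorm nrm (g x) ≤ δ * nrm x)
    -- Assumption 5: unbiased stochastic oracle with variance bounded by s²
    (Fs : Vec d → Ξ → Vec d) (hFsmeas : Measurable (Function.uncurry Fs))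
    (hunbiased : ∀ v ∈ W, ∫ x, Fs v x ∂ν = F v)
    (hvariance : ∀ v ∈ W, ∫ x, dualNorm nrm (Fs v x - F v) ^ 2 ∂ν ≤ s ^ 2)
    -- SOptDE algorithm with σ = 0
    (hα : α = min (γ / 32) (1 / 16))
    (a A : ℕ → ℝ) (hA0 : A 0 = 0)
    (ha : ∀ k, 1 ≤ k → a k = α * γ * Real.sqrt (1 + σ * A (k - 1)) / L)
    (hArec : ∀ k, 1 ≤ k → A k = A (k - 1) + a k)
    (w z : ℕ → Ω → Vec d) (w0 : Vec d) (hw0W : w0 ∈ W)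
    (hw0 : ∀ ω, w 0 ω = w0) (hz0 : ∀ ω, z 0 ω = w0)
    (hwmeas : ∀ k, Measurable (w k)) (hzmeas : ∀ k, Measurable (z k))
    (hwk : ∀ k, 1 ≤ k → ∀ ω, w k ω ∈ W ∧
      IsMinOn (fun x => (⟪Fs (w (k - 1) ω) (ξ (k - 1) ω), x⟫ : ℝ) +
        L ^ 2 * a k / (2 * (α * γ) ^ 2) * nrm (x - z (k - 1) ω) ^ 2) W (w k ω))
    (hzk : ∀ k, 1 ≤ k → ∀ ω, z k ω ∈ W ∧
      IsMinOn (fun x =>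
        (⟪∑ i ∈ Finset.Icc 1 k, a i • (Fs (w i ω) (ξ i ω) - (σ / γ) • g (w i ω - w0)),
          x⟫ : ℝ) +
        (1 + σ * A k) / (2 * γ) * nrm (x - w0) ^ 2) W (z k ω))
    (K : ℕ) (hK : 1 ≤ K) :
    ∀ u ∈ W,
      Integrable (fun ω => ∑ k ∈ Finset.Icc 1 K, a k *
        ((⟪F (w k ω), w k ω - u⟫ : ℝ) - σ / γ * breg nrm g (w k ω - w0) (u - w0))) μ →
      Integrable (fun ω => ∑ k ∈ Finset.Icc 1 K,
        (a k * ((⟪Fs (w k ω) (ξ k ω) +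
              (L ^ 2 * a k / (α * γ) ^ 2) • g (w k ω - z (k - 1) ω), w k ω - z k ω⟫ : ℝ) -
            L ^ 2 * a k / (α * γ) ^ 2 *
              (nrm (w k ω - z (k - 1) ω) ^ 2 / 2 + γ / 2 * nrm (w k ω - z k ω) ^ 2)) +
          a k * (⟪F (w k ω) - Fs (w k ω) (ξ k ω), w k ω - u⟫ : ℝ))) μ →
      (∫ ω, (∑ k ∈ Finset.Icc 1 K, a k *
          ((⟪F (w k ω), w k ω - u⟫ : ℝ) - σ / γ * breg nrm g (w k ω - w0) (u - w0))) ∂μ) ≤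
        (∫ ω, (∑ k ∈ Finset.Icc 1 K,
          (a k * ((⟪Fs (w k ω) (ξ k ω) +
                (L ^ 2 * a k / (α * γ) ^ 2) • g (w k ω - z (k - 1) ω), w k ω - z k ω⟫ : ℝ) -
              L ^ 2 * a k / (α * γ) ^ 2 *
                (nrm (w k ω - z (k - 1) ω) ^ 2 / 2 + γ / 2 * nrm (w k ω - z k ω) ^ 2)) +
            a k * (⟪F (w k ω) - Fs (w k ω) (ξ k ω), w k ω - u⟫ : ℝ))) ∂μ) +
        1 / (2 * γ) * nrm (u - w0) ^ 2 :=
  soptde_estimation_sequence_inequality_general μ ξ W hWcv F nrm g L γ α σ hnrm_smul hL hγ0 hσ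
    hstrong Fs hα a A hA0 ha hArec w z w0 hw0W hz0 hzk K
end
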